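/- arXiv:2008.08222 — 5 statements merged into one kernel-verified Lean document; each statement's English description precedes it below -/
import Mathlib

section
/- An acyclic orientation r of a finite connected graph G has a unique source equal to a fixed vertex v if and only if for every vertex u of G there is a directed path in r from v to u. -/
/-!
On a finite vertex set an acyclic relation is well-founded, so walking backwards along edges
from any vertex must end at a source. If `v` is the only source, every such backward walk ends
at `v`, which gives a directed path from `v`. Conversely, a source reachable from `v` must be `v`
itself, and an edge into `v` would close a cycle through `v`.
-/

namespace Relation

variable {α : Type*} {r : α → α → Prop} {a b : α}

theorem ReflTransGen.eq_of_forall_not_rel (h : ReflTransGen r a b) (hb : ∀ c, ¬ r c b) :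
    a = b := by
  rcases h.cases_tail with rfl | ⟨c, -, hcb⟩
  · rfl
  · exact absurd hcb (hb c)

theorem not_rel_of_forall_reflTransGen (hacyc : ∀ x, ¬ TransGen r x x)
    (h : ∀ b, ReflTransGen r a b) (c : α) : ¬ r c a :=
  fun hca => hacyc a (TransGen.tail' (h c) hca)

theorem reflTransGen_of_forall_not_rel_eq (hwf : WellFounded r)
    (h : ∀ b, (∀ c, ¬ r c b) → b = a) (b : α) : ReflTransGen r a b := by
  induction b using hwf.induction with
  | _ b ih =>
    by_cases hpred : ∃ c, r c b
    · obtain ⟨c, hcb⟩ := hpred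
      exact (ih c hcb).tail hcb
    · rw [h b (not_exists.mp hpred)]

theorem wellFounded_of_forall_not_transGen_self [Finite α] (hacyc : ∀ x, ¬ TransGen r x x) :
    WellFounded r :=
  have : Std.Irrefl (TransGen r) := ⟨hacyc⟩
  Subrelation.wf TransGen.single (Finite.wellFounded_of_trans_of_irrefl _)

end Relation

theorem unique_source_iff_reachable_general {V : Type*} [Fintype V]
    (r : V → V → Prop)
    (hacyc : ∀ x, ¬ Relation.TransGen r x x) (v : V) :
    ((∀ w, ¬ r w v) ∧ ∀ u, (∀ w, ¬ r w u) → u = v) ↔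
      ∀ u, Relation.ReflTransGen r v u :=
  ⟨fun ⟨_, huniq⟩ =>
      Relation.reflTransGen_of_forall_not_rel_eq
        (Relation.wellFounded_of_forall_not_transGen_self hacyc) huniq,
    fun hreach =>
      ⟨Relation.not_rel_of_forall_reflTransGen hacyc hreach,
        fun u hu => ((hreach u).eq_of_forall_not_rel hu).symm⟩⟩

/-- For an acyclic orientation `r` of a finite connected graph `G`, the vertex `v`
is the unique source iff every vertex is reachable from `v` by a directed path. -/
theorem unique_source_iff_reachable {V : Type*} [Fintype V]
    (G : SimpleGraph V) (hG : G.Connected) (r : V → V → Prop)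
    (hsub : ∀ a b, r a b → G.Adj a b)
    (htot : ∀ a b, G.Adj a b → (r a b ↔ ¬ r b a))
    (hacyc : ∀ x, ¬ Relation.TransGen r x x) (v : V) :
    ((∀ w, ¬ r w v) ∧ ∀ u, (∀ w, ¬ r w u) → u = v) ↔
      ∀ u, Relation.ReflTransGen r v u :=
  unique_source_iff_reachable_general r hacyc v
end

section
/- Let ρ be a set partition of {0,...,n−1}. If S is a block and {b, a_j+1} is another block of ρ with a_{j-1} < b < a_j and a_j ∈ S, then any third block B crosses S ∪ {b, a_j+1} if and only if B crosses S or B crosses {b, a_j+1}. -/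
/-- Two blocks `B`, `B'` form a crossing: there are `i, k ∈ B` and `j, l ∈ B'`
with `i < j < k < l` or `i > j > k > l`. -/
def Crosses (B B' : Finset ℕ) : Prop :=
  ∃ i ∈ B, ∃ k ∈ B, ∃ j ∈ B', ∃ l ∈ B',
    (i < j ∧ j < k ∧ k < l) ∨ (i > j ∧ j > k ∧ k > l)

/-- `ρ` is a set partition of `{0, ..., n-1}`. -/
def IsPartitionOf (n : ℕ) (ρ : Finset (Finset ℕ)) : Prop :=
  (∀ B ∈ ρ, B.Nonempty) ∧
  (∀ B ∈ ρ, ∀ B' ∈ ρ, B ≠ B' → Disjoint B B') ∧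
  ρ.sup id = Finset.range n

lemma crosses_mono_right {B S T : Finset ℕ} (h : S ⊆ T) (hc : Crosses B S) :
    Crosses B T := by
  obtain ⟨i, hi, k, hk, j, hj, l, hl, hord⟩ := hc
  exact ⟨i, hi, k, hk, j, h hj, l, h hl, hord⟩

/-- If `S` is a block of `ρ`, `x = a_j ∈ S`, `b` lies strictly between `a_{j-1}`
and `a_j`, `x+1` lies strictly below the next element `a_{j+1}` of `S`, and
`{b, x+1}` is another block of `ρ`, then a third block `B` crosses `S ∪ {b, x+1}`
iff it crosses `S` or crosses `{b, x+1}`. -/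
theorem crosses_union_iff (n : ℕ) (ρ : Finset (Finset ℕ)) (hρ : IsPartitionOf n ρ)
    (S : Finset ℕ) (hS : S ∈ ρ) (x b : ℕ)
    (hx : x ∈ S) (hbx : b < x)
    (hblow : ∃ y ∈ S, y < b)                       -- a_{j-1} < b
    (hleast : ∀ y ∈ S, b < y → x ≤ y)              -- x = a_j is least above b
    (hnext : ∀ y ∈ S, x < y → x + 1 < y)           -- a_j + 1 < a_{j+1}
    (hP : ({b, x + 1} : Finset ℕ) ∈ ρ)
    (B : Finset ℕ) (hB : B ∈ ρ) (hBS : B ≠ S) (hBP : B ≠ ({b, x + 1} : Finset ℕ)) :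
    Crosses B (S ∪ {b, x + 1}) ↔ Crosses B S ∨ Crosses B ({b, x + 1} : Finset ℕ) := by
  obtain ⟨-, hdisj, -⟩ := hρ
  have hBSd := hdisj B hB S hS hBS
  have hBPd := hdisj B hB _ hP hBP
  have hnB : ∀ e ∈ B, e ≠ b ∧ e ≠ x ∧ e ≠ x + 1 := by
    intro e he
    refine ⟨?_, ?_, ?_⟩
    · intro h; exact (Finset.disjoint_left.mp hBPd he) (by simp [h])
    · intro h; exact (Finset.disjoint_left.mp hBSd he) (h ▸ hx)
    · intro h; exact (Finset.disjoint_left.mp hBPd he) (by simp [h])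
  constructor
  · rintro ⟨i, hi, k, hk, j, hj, l, hl, hord⟩
    obtain ⟨hib, hixx, hix1⟩ := hnB i hi
    obtain ⟨hkb, hkx, hkx1⟩ := hnB k hk
    have hbP : b ∈ ({b, x + 1} : Finset ℕ) := by simp
    have hx1P : x + 1 ∈ ({b, x + 1} : Finset ℕ) := by simp
    have crS : ∀ j' ∈ S, ∀ l' ∈ S,
        (i < j' ∧ j' < k ∧ k < l') ∨ (i > j' ∧ j' > k ∧ k > l') →
        Crosses B S ∨ Crosses B ({b, x + 1} : Finset ℕ) :=
      fun j' hj' l' hl' h => Or.inl ⟨i, hi, k, hk, j', hj', l', hl', h⟩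
    have crP : ∀ i' ∈ B, ∀ k' ∈ B,
        (i' < b ∧ b < k' ∧ k' < x + 1) ∨ (i' > x + 1 ∧ x + 1 > k' ∧ k' > b) →
        Crosses B S ∨ Crosses B ({b, x + 1} : Finset ℕ) := by
      rintro i' hi' k' hk' (h | h)
      · exact Or.inr ⟨i', hi', k', hk', b, hbP, x + 1, hx1P, Or.inl h⟩
      · exact Or.inr ⟨i', hi', k', hk', x + 1, hx1P, b, hbP, Or.inr h⟩
    simp only [Finset.mem_union, Finset.mem_insert, Finset.mem_singleton] at hj hl
    rcases hj with hjS | hj | hj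
    · rcases hl with hlS | hl | hl
      · exact crS j hjS l hlS hord
      · -- l = b, j ∈ S
        rcases hord with h | h
        · -- i < j < k < b : use x ∈ S above k
          exact crS j hjS x hx (Or.inl (by omega))
        · -- b < k < j < i, j ∈ S, j > b so j ≥ x
          have hjx := hleast j hjS (by omega)
          rcases lt_trichotomy k x with hkl | hke | hkg
          · -- k ∈ (b, x+1); i > j ≥ x so i > x+1
            exact crP i hi k hk (Or.inr (by omega))
          · exact absurd hke hkx
          · -- k > x, k ≠ x+1 so k > x+1 : x < k < j < i
            exact crS j hjS x hx (Or.inr (by omega))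
      · -- l = x+1, j ∈ S
        rcases hord with h | h
        · -- i < j < k < x+1, k ≠ x so k < x; x ∈ S above k
          exact crS j hjS x hx (Or.inl (by omega))
        · -- x+1 < k < j < i : x ∈ S below k
          exact crS j hjS x hx (Or.inr (by omega))
    · -- j = b
      rcases hl with hlS | hl | hl
      · rcases hord with h | h
        · -- i < b < k < l, l ∈ S, l > b so l ≥ x
          have hlx := hleast l hlS (by omega)
          rcases lt_trichotomy k x with hkl | hke | hkg
          · exact crP i hi k hk (Or.inl (by omega))
          · exact absurd hke hkx
          · -- k > x, k ≠ x+1 so k > x+1; x ∈ S between i and k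
            exact crS x hx l hlS (Or.inl (by omega))
        · -- l < k < b < i, l ∈ S
          rcases lt_trichotomy i x with hil | hie | hig
          · -- b < i < x : k < b < i < x+1
            exact crP k hk i hi (Or.inl (by omega))
          · exact absurd hie hixx
          · -- i > x, i ≠ x+1 so i > x+1 : l < k < x < i
            exact crS x hx l hlS (Or.inr (by omega))
      · omega
      · -- j = b, l = x+1 : both in P
        exact Or.inr ⟨i, hi, k, hk, b, hbP, x + 1, hx1P, by omega⟩
    · -- j = x+1
      rcases hl with hlS | hl | hl
      · rcases hord with h | h
        · -- i < x+1 < k < l, l ∈ S; i ≠ x so i < x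
          rcases lt_trichotomy i b with hil | hie | hig
          · -- i < b < x < x+1 < k < l
            exact crS x hx l hlS (Or.inl (by omega))
          · exact absurd hie hib
          · -- b < i < x : k > x+1 > i > b
            exact crP k hk i hi (Or.inr (by omega))
        · -- l < k < x+1 < i, l ∈ S; k ≠ x so k < x
          rcases lt_trichotomy k b with hkl | hke | hkg
          · -- l < k < b < x < i
            exact crS x hx l hlS (Or.inr (by omega))
          · exact absurd hke hkb
          · -- b < k < x : i > x+1 > k > b
            exact crP i hi k hk (Or.inr (by omega))
      · -- j = x+1, l = b : both in P
        exact Or.inr ⟨i, hi, k, hk, x + 1, hx1P, b, hbP, by omega⟩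
      · omega
  · rintro (h | h)
    · exact crosses_mono_right Finset.subset_union_left h
    · exact crosses_mono_right Finset.subset_union_right h
end

section
/- Contracting the edge between two vertices u, v in an acyclic orientation r of a graph G, where u and v are the only two sources of r when the edge uv is disregarded, yields an acyclic orientation of the contracted graph G/uv whose unique source is the merged vertex. -/
/-- The projection map identifying `v` with `u` (contraction of the edge `uv`). -/
def contractMap {V : Type*} [DecidableEq V] (u v : V) (x : V) : V :=
  if x = v then u else x

/-- The orientation induced on the contracted graph `G/uv`: the edge `uv` is
removed, `u` and `v` are identified, and every remaining edge keeps its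
direction. -/
def contractRel {V : Type*} [DecidableEq V] (u v : V) (r : V → V → Prop)
    (a b : V) : Prop :=
  a ≠ b ∧ ∃ a' b', contractMap u v a' = a ∧ contractMap u v b' = b ∧
    r a' b' ∧ ¬(a' = u ∧ b' = v)

/-! Since `u → v` is the only edge into `v`, every edge of the contraction ends outside `v`
and lifts to an edge of `r`, possibly preceded by `u → v`; so cycles of the contraction lift
to cycles of `r`. A vertex `w ≠ v` with no incoming edge in the contraction has no incoming
edge in `r` either, so it is `u`. -/

section

open Relation

variable {V : Type*} [DecidableEq V] {u v : V} {r : V → V → Prop}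

theorem contractMap_self : contractMap u v v = u := if_pos rfl

theorem contractMap_of_ne {x : V} (hx : x ≠ v) : contractMap u v x = x := if_neg hx

theorem exists_lift_of_contractRel (hsrc_v : ∀ w, w ≠ u → ¬ r w v) {a b : V}
    (h : contractRel u v r a b) : b ≠ v ∧ ∃ a', contractMap u v a' = a ∧ r a' b := by
  obtain ⟨-, a', b', ha, hb, hr, hne⟩ := h
  have hb'v : b' ≠ v := by
    rintro rfl
    exact hne ⟨not_not.mp fun ha'u => hsrc_v a' ha'u hr, rfl⟩
  rw [contractMap_of_ne hb'v] at hb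
  subst hb
  exact ⟨hb'v, a', ha, hr⟩

theorem transGen_of_contractRel (hruv : r u v) (hsrc_v : ∀ w, w ≠ u → ¬ r w v) {a b : V}
    (h : contractRel u v r a b) : TransGen r a b := by
  obtain ⟨-, a', rfl, hr⟩ := exists_lift_of_contractRel hsrc_v h
  by_cases ha'v : a' = v
  · subst ha'v
    rw [contractMap_self]
    exact .head hruv (.single hr)
  · rw [contractMap_of_ne ha'v]
    exact .single hr

theorem contractRel_acyclic (hacyc : ∀ x, ¬ TransGen r x x) (hruv : r u v)
    (hsrc_v : ∀ w, w ≠ u → ¬ r w v) (x : V) : ¬ TransGen (contractRel u v r) x x := by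
  intro hx
  exact hacyc x (TransGen.lift' id (fun _ _ => transGen_of_contractRel hruv hsrc_v) x x hx)

theorem not_contractRel_to_left (hsrc_u : ∀ w, ¬ r w u) (hsrc_v : ∀ w, w ≠ u → ¬ r w v)
    (x : V) : ¬ contractRel u v r x u := fun h =>
  let ⟨_, a', _, hr⟩ := exists_lift_of_contractRel hsrc_v h
  hsrc_u a' hr

theorem contractRel_contractMap (hirr : ∀ x, ¬ r x x) (hsrc_u : ∀ w, ¬ r w u) {x w : V}
    (hr : r x w) (hw : w ≠ v) : contractRel u v r (contractMap u v x) w := by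
  refine ⟨?_, x, w, rfl, contractMap_of_ne hw, hr, fun h => hw h.2⟩
  by_cases hxv : x = v
  · rw [hxv, contractMap_self]
    rintro rfl
    exact hsrc_u v (hxv ▸ hr)
  · rw [contractMap_of_ne hxv]
    rintro rfl
    exact hirr x hr

end

theorem contract_unique_source_general {V : Type*} [DecidableEq V]
    (u v : V)
    (r : V → V → Prop)
    (hacyc : ∀ x, ¬ Relation.TransGen r x x)
    (hruv : r u v)
    (hsrc_u : ∀ w, ¬ r w u)
    (hsrc_v : ∀ w, w ≠ u → ¬ r w v)
    (honly : ∀ w, (∀ x, r x w → x = u ∧ w = v) → w = u ∨ w = v) :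
    (∀ x, ¬ Relation.TransGen (contractRel u v r) x x) ∧
    (∀ x, ¬ contractRel u v r x u) ∧
    (∀ w, w ≠ v → (∀ x, ¬ contractRel u v r x w) → w = u) := by
  refine ⟨contractRel_acyclic hacyc hruv hsrc_v, not_contractRel_to_left hsrc_u hsrc_v, ?_⟩
  intro w hwv hsrc_w
  have hirr : ∀ x, ¬ r x x := fun x hx => hacyc x (.single hx)
  have hno_in : ∀ x, r x w → x = u ∧ w = v := fun x hx =>
    (hsrc_w _ (contractRel_contractMap hirr hsrc_u hx hwv)).elim
  exact (honly w hno_in).resolve_right hwv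

/-- Contracting the edge `uv` in an acyclic orientation `r` of a connected graph `G`,
where `u` and `v` are the only two sources of `r` once the edge `uv` is
disregarded, yields an acyclic orientation of `G/uv` whose unique source is the
merged vertex. -/
theorem contract_unique_source {V : Type*} [Fintype V] [DecidableEq V]
    (G : SimpleGraph V) (hG : G.Connected) (u v : V) (huv : G.Adj u v)
    (r : V → V → Prop)
    (hsub : ∀ a b, r a b → G.Adj a b)
    (htot : ∀ a b, G.Adj a b → (r a b ↔ ¬ r b a))
    (hacyc : ∀ x, ¬ Relation.TransGen r x x)
    (hruv : r u v)
    (hsrc_u : ∀ w, ¬ r w u)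
    (hsrc_v : ∀ w, w ≠ u → ¬ r w v)
    (honly : ∀ w, (∀ x, r x w → x = u ∧ w = v) → w = u ∨ w = v) :
    (∀ x, ¬ Relation.TransGen (contractRel u v r) x x) ∧
    (∀ x, ¬ contractRel u v r x u) ∧
    (∀ w, w ≠ v → (∀ x, ¬ contractRel u v r x w) → w = u) :=
  contract_unique_source_general u v r hacyc hruv hsrc_u hsrc_v honly
end

section
/- Rotation invariance: for any set S ⊆ {0,...,n−1} and any integer t, the number of pairs (ρ, r), where ρ is a partition of {0,...,n−1} having S as a block and all other blocks of size 2, and r is a root-connected orientation of the crossing graph G(ρ) with root S, equals the corresponding count for the rotated set S + t (elementwise addition mod n). -/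
/-- `r` is an orientation of the crossing graph `G(ρ)`: it relates exactly the
pairs of distinct crossing blocks of `ρ`, choosing one direction for each edge. -/
def IsOrientation (ρ : Finset (Finset ℕ)) (r : Finset ℕ → Finset ℕ → Prop) : Prop :=
  (∀ B B', r B B' → B ∈ ρ ∧ B' ∈ ρ ∧ B ≠ B' ∧ Crosses B B') ∧
  (∀ B ∈ ρ, ∀ B' ∈ ρ, B ≠ B' → Crosses B B' → (r B B' ↔ ¬ r B' B))

/-- An orientation is acyclic if it has no directed cycle. -/
def AcyclicRel (r : Finset ℕ → Finset ℕ → Prop) : Prop :=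
  ∀ B, ¬ Relation.TransGen r B B

/-- `r` is a root-connected orientation of `G(ρ)` with root `S`: it is an acyclic
orientation and `S` is its unique source. -/
def RootConnected (ρ : Finset (Finset ℕ)) (r : Finset ℕ → Finset ℕ → Prop)
    (S : Finset ℕ) : Prop :=
  IsOrientation ρ r ∧ AcyclicRel r ∧ S ∈ ρ ∧ (∀ B', ¬ r B' S) ∧
    (∀ B ∈ ρ, (∀ B', ¬ r B' B) → B = S)

/-- `ρ ∈ M_S(n)`: a partition of `{0,...,n-1}` with `S` as a block and all
other blocks of size 2. -/
def MSPartition (n : ℕ) (S : Finset ℕ) (ρ : Finset (Finset ℕ)) : Prop :=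
  IsPartitionOf n ρ ∧ S ∈ ρ ∧ ∀ B ∈ ρ, B ≠ S → B.card = 2

/-- The number of pairs `(ρ, r)` with `ρ ∈ M_S(n)` and `r` a root-connected
orientation of `G(ρ)` with root `S`.  (This is `A_{k+1}(S)` when `n = |S| + 2k`.) -/
noncomputable def countA (n : ℕ) (S : Finset ℕ) : ℕ :=
  Nat.card {p : Finset (Finset ℕ) × (Finset ℕ → Finset ℕ → Prop) //
    MSPartition n S p.1 ∧ RootConnected p.1 p.2 S}

/-! Rotating `{0, …, n-1}` by one step preserves crossings: only the largest of four
interleaved points `i < j < k < l` can wrap around to `0`, and then the pattern of `B, B'`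
becomes the interleaving pattern of `B', B`. Hence every rotation is a permutation of `ℕ`
that preserves `range n` and the crossing relation on its subsets, and relabelling blocks and
orientation along such a permutation is a bijection between the pairs `(ρ, r)` counted for `S`
and those counted for its image. -/

open Finset Function

def Interleaves (X Y : Finset ℕ) : Prop :=
  ∃ i ∈ X, ∃ j ∈ Y, ∃ k ∈ X, ∃ l ∈ Y, i < j ∧ j < k ∧ k < l

theorem crosses_iff_interleaves {B B' : Finset ℕ} :
    Crosses B B' ↔ Interleaves B B' ∨ Interleaves B' B := by
  constructor
  · rintro ⟨i, hi, k, hk, j, hj, l, hl, h | h⟩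
    · exact Or.inl ⟨i, hi, j, hj, k, hk, l, hl, h⟩
    · exact Or.inr ⟨l, hl, k, hk, j, hj, i, hi, by omega⟩
  · rintro (⟨i, hi, j, hj, k, hk, l, hl, h⟩ | ⟨l, hl, k, hk, j, hj, i, hi, h⟩)
    · exact ⟨i, hi, k, hk, j, hj, l, hl, Or.inl h⟩
    · exact ⟨i, hi, k, hk, j, hj, l, hl, Or.inr (by omega)⟩

theorem AcyclicRel.onFun {r : Finset ℕ → Finset ℕ → Prop} (h : AcyclicRel r)
    (f : Finset ℕ → Finset ℕ) : AcyclicRel (r on f) :=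
  fun B hB => h (f B) (Relation.TransGen.lift f (fun _ _ => id) _ _ hB)

section Relabel

variable {ρ : Finset (Finset ℕ)} {r : Finset ℕ → Finset ℕ → Prop} {S : Finset ℕ}
  (E : Finset ℕ ≃ Finset ℕ)

theorem IsOrientation.map (hE : ∀ B ∈ ρ, ∀ B' ∈ ρ, Crosses (E B) (E B') ↔ Crosses B B')
    (h : IsOrientation ρ r) : IsOrientation (ρ.map E.toEmbedding) (r on E.symm) := by
  obtain ⟨hedge, hdir⟩ := h
  refine ⟨fun B B' hr => ?_, fun B hB B' hB' hne hc => ?_⟩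
  · obtain ⟨hB, hB', hne, hc⟩ := hedge _ _ hr
    refine ⟨mem_map_equiv.2 hB, mem_map_equiv.2 hB', E.symm.injective.ne_iff.1 hne, ?_⟩
    simpa using (hE _ hB _ hB').2 hc
  · rw [mem_map_equiv] at hB hB'
    exact hdir _ hB _ hB' (E.symm.injective.ne hne) ((hE _ hB _ hB').1 (by simpa using hc))

theorem RootConnected.map (hE : ∀ B ∈ ρ, ∀ B' ∈ ρ, Crosses (E B) (E B') ↔ Crosses B B')
    (h : RootConnected ρ r S) : RootConnected (ρ.map E.toEmbedding) (r on E.symm) (E S) := by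
  obtain ⟨hor, hacyc, hS, hsrc, huniq⟩ := h
  refine ⟨hor.map E hE, hacyc.onFun E.symm, mem_map_of_mem _ hS,
    fun B => by simpa [onFun] using hsrc _, fun B hB hB_src => ?_⟩
  rw [mem_map_equiv] at hB
  rw [← huniq _ hB fun C hC => hB_src (E C) (by simpa [onFun] using hC), Equiv.apply_symm_apply]

def relabel : Finset (Finset ℕ) × (Finset ℕ → Finset ℕ → Prop) ≃
    Finset (Finset ℕ) × (Finset ℕ → Finset ℕ → Prop) where
  toFun p := (p.1.map E.toEmbedding, p.2 on E.symm)
  invFun p := (p.1.map E.symm.toEmbedding, p.2 on E)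
  left_inv p := Prod.ext (by simp [map_map]) (by ext; simp [onFun])
  right_inv p := Prod.ext (by simp [map_map]) (by ext; simp [onFun])

theorem relabel_symm : (relabel E).symm = relabel E.symm := rfl

end Relabel

section Permutation

variable {n : ℕ} {ρ : Finset (Finset ℕ)} {S : Finset ℕ}

theorem IsPartitionOf.subset_range (h : IsPartitionOf n ρ) {B : Finset ℕ} (hB : B ∈ ρ) :
    B ⊆ range n :=
  h.2.2 ▸ le_sup (f := id) hB

theorem IsPartitionOf.map (σ : Equiv.Perm ℕ) (hσ : ∀ x, σ x < n ↔ x < n)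
    (h : IsPartitionOf n ρ) : IsPartitionOf n (ρ.map σ.finsetCongr.toEmbedding) := by
  obtain ⟨hne, hdisj, hcover⟩ := h
  refine ⟨forall_mem_map.2 fun B hB => ?_, forall_mem_map.2 fun B hB => forall_mem_map.2
    fun B' hB' hBB' => ?_, ?_⟩
  · simpa using hne B hB
  · simpa using hdisj B hB B' hB' (by rintro rfl; exact hBB' rfl)
  · ext x
    have hx : σ.symm x ∈ ρ.sup id ↔ σ.symm x ∈ range n := by rw [hcover]
    simp only [sup_map, mem_sup, comp_apply, id, Equiv.coe_toEmbedding, Equiv.finsetCongr_apply,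
      mem_map_equiv, mem_range] at hx ⊢
    rw [hx, ← hσ, Equiv.apply_symm_apply]

theorem MSPartition.map (σ : Equiv.Perm ℕ) (hσ : ∀ x, σ x < n ↔ x < n)
    (h : MSPartition n S ρ) :
    MSPartition n (σ.finsetCongr S) (ρ.map σ.finsetCongr.toEmbedding) :=
  ⟨h.1.map σ hσ, mem_map_of_mem _ h.2.1, forall_mem_map.2 fun B hB hne => by
    simpa using h.2.2 B hB (by rintro rfl; exact hne rfl)⟩

def IsCrossingSymmetry (n : ℕ) (σ : Equiv.Perm ℕ) : Prop :=
  (∀ x, σ x < n ↔ x < n) ∧ ∀ B B' : Finset ℕ, B ⊆ range n → B' ⊆ range n →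
    (Crosses (σ.finsetCongr B) (σ.finsetCongr B') ↔ Crosses B B')

theorem finsetCongr_subset_range {σ : Equiv.Perm ℕ} (hσ : ∀ x, σ x < n ↔ x < n)
    {B : Finset ℕ} (hB : B ⊆ range n) : σ.finsetCongr B ⊆ range n := by
  intro x hx
  simp only [Equiv.finsetCongr_apply, mem_map_equiv] at hx
  simpa [← hσ (σ.symm x)] using hB hx

theorem IsCrossingSymmetry.symm {σ : Equiv.Perm ℕ} (hσ : IsCrossingSymmetry n σ) :
    IsCrossingSymmetry n σ.symm := by
  have hrange (x : ℕ) : σ.symm x < n ↔ x < n := by simpa using (hσ.1 (σ.symm x)).symm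
  refine ⟨hrange, fun B B' hB hB' => ?_⟩
  rw [← hσ.2 _ _ (finsetCongr_subset_range hrange hB) (finsetCongr_subset_range hrange hB'),
    ← Equiv.finsetCongr_symm, Equiv.apply_symm_apply, Equiv.apply_symm_apply]

def IsRootedPair (n : ℕ) (S : Finset ℕ)
    (p : Finset (Finset ℕ) × (Finset ℕ → Finset ℕ → Prop)) : Prop :=
  MSPartition n S p.1 ∧ RootConnected p.1 p.2 S

theorem IsRootedPair.relabel {σ : Equiv.Perm ℕ} (hσ : IsCrossingSymmetry n σ)
    {p : Finset (Finset ℕ) × (Finset ℕ → Finset ℕ → Prop)} (h : IsRootedPair n S p) :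
    IsRootedPair n (σ.finsetCongr S) (relabel σ.finsetCongr p) :=
  ⟨h.1.map σ hσ.1, h.2.map _ fun B hB B' hB' =>
    hσ.2 B B' (h.1.1.subset_range hB) (h.1.1.subset_range hB')⟩

theorem countA_finsetCongr {σ : Equiv.Perm ℕ} (hσ : IsCrossingSymmetry n σ) :
    countA n (σ.finsetCongr S) = countA n S := by
  refine (Nat.card_congr ((relabel σ.finsetCongr).subtypeEquiv fun p =>
    ⟨IsRootedPair.relabel hσ, fun h => ?_⟩)).symm
  have := h.relabel hσ.symm
  rwa [← Equiv.finsetCongr_symm, ← relabel_symm, Equiv.symm_apply_apply,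
    Equiv.symm_apply_apply] at this

end Permutation

theorem Equiv.Perm.finsetCongr_mul {α : Type*} (σ τ : Equiv.Perm α) (s : Finset α) :
    (σ * τ).finsetCongr s = σ.finsetCongr (τ.finsetCongr s) := by
  simp only [Equiv.finsetCongr_apply, map_map]
  rfl

theorem Equiv.Perm.finsetCongr_one {α : Type*} (s : Finset α) :
    (1 : Equiv.Perm α).finsetCongr s = s :=
  Finset.map_refl

section Rotation

variable {n : ℕ} [NeZero n]

def ZMod.valEquiv (n : ℕ) [NeZero n] : ZMod n ≃ {x : ℕ // x < n} where
  toFun a := ⟨a.val, a.val_lt⟩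
  invFun x := x.1
  left_inv := ZMod.natCast_zmod_val
  right_inv x := Subtype.ext (ZMod.val_cast_of_lt x.2)

def rotate (n : ℕ) [NeZero n] (a : ZMod n) : Equiv.Perm ℕ :=
  (Equiv.addRight a).extendDomain (ZMod.valEquiv n)

theorem rotate_apply_of_lt (a : ZMod n) {x : ℕ} (hx : x < n) :
    rotate n a x = ((x : ZMod n) + a).val := by
  rw [rotate, Equiv.Perm.extendDomain_apply_subtype _ (ZMod.valEquiv n) hx]
  rfl

theorem rotate_apply_of_not_lt (a : ZMod n) {x : ℕ} (hx : ¬x < n) : rotate n a x = x :=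
  Equiv.Perm.extendDomain_apply_not_subtype _ (ZMod.valEquiv n) hx

theorem rotate_lt_iff (a : ZMod n) (x : ℕ) : rotate n a x < n ↔ x < n := by
  by_cases hx : x < n
  · simp [hx, rotate_apply_of_lt, ZMod.val_lt]
  · rw [rotate_apply_of_not_lt a hx]

theorem rotate_add (a b : ZMod n) : rotate n (a + b) = rotate n b * rotate n a := by
  rw [rotate, rotate, rotate, Equiv.Perm.extendDomain_mul, Equiv.addRight_add]

theorem rotate_zero : rotate n 0 = 1 := by
  rw [rotate, Equiv.addRight_zero, Equiv.Perm.extendDomain_one]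

theorem rotate_one_apply_of_lt {x : ℕ} (hx : x + 1 < n) : rotate n 1 x = x + 1 := by
  rw [rotate_apply_of_lt 1 (by omega), ← Nat.cast_succ, ZMod.val_cast_of_lt hx]

theorem rotate_one_apply_last : rotate n 1 (n - 1) = 0 := by
  have hn : n - 1 < n := Nat.sub_lt (Nat.pos_of_neZero n) one_pos
  rw [rotate_apply_of_lt 1 hn, ← Nat.cast_succ, Nat.succ_eq_add_one,
    Nat.sub_add_cancel (Nat.pos_of_neZero n), ZMod.natCast_self, ZMod.val_zero]

theorem Interleaves.rotate_one {X Y : Finset ℕ} (hY : Y ⊆ range n) (h : Interleaves X Y) :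
    Interleaves ((rotate n 1).finsetCongr X) ((rotate n 1).finsetCongr Y) ∨
      Interleaves ((rotate n 1).finsetCongr Y) ((rotate n 1).finsetCongr X) := by
  obtain ⟨i, hi, j, hj, k, hk, l, hl, hij, hjk, hkl⟩ := h
  have hln : l < n := mem_range.1 (hY hl)
  have mem {Z : Finset ℕ} {x : ℕ} (hx : x ∈ Z) :
      rotate n 1 x ∈ (rotate n 1).finsetCongr Z :=
    mem_map_of_mem _ hx
  rcases (show l + 1 < n ∨ l = n - 1 by omega) with hlt | rfl
  · refine Or.inl ⟨_, mem hi, _, mem hj, _, mem hk, _, mem hl, ?_⟩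
    rw [rotate_one_apply_of_lt, rotate_one_apply_of_lt, rotate_one_apply_of_lt,
      rotate_one_apply_of_lt] <;> omega
  · refine Or.inr ⟨_, mem hl, _, mem hi, _, mem hj, _, mem hk, ?_⟩
    rw [rotate_one_apply_last, rotate_one_apply_of_lt, rotate_one_apply_of_lt,
      rotate_one_apply_of_lt] <;> omega

theorem crosses_rotate_one {B B' : Finset ℕ} (hB : B ⊆ range n) (hB' : B' ⊆ range n)
    (h : Crosses B B') : Crosses ((rotate n 1).finsetCongr B) ((rotate n 1).finsetCongr B') := by
  rw [crosses_iff_interleaves] at h ⊢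
  rcases h with h | h
  · exact h.rotate_one hB'
  · exact (h.rotate_one hB).symm

theorem finsetCongr_rotate_subset_range (a : ZMod n) {B : Finset ℕ} (hB : B ⊆ range n) :
    (rotate n a).finsetCongr B ⊆ range n :=
  finsetCongr_subset_range (rotate_lt_iff a) hB

theorem crosses_rotate (a : ZMod n) {B B' : Finset ℕ} (hB : B ⊆ range n)
    (hB' : B' ⊆ range n) (h : Crosses B B') :
    Crosses ((rotate n a).finsetCongr B) ((rotate n a).finsetCongr B') := by
  rw [← ZMod.natCast_zmod_val a]
  induction a.val with
  | zero => simpa only [Nat.cast_zero, rotate_zero, Equiv.Perm.finsetCongr_one] using h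
  | succ m ih =>
    have hmul (C : Finset ℕ) : (rotate n (m + 1 : ℕ)).finsetCongr C =
        (rotate n 1).finsetCongr ((rotate n m).finsetCongr C) := by
      rw [Nat.cast_succ, rotate_add, Equiv.Perm.finsetCongr_mul]
    rw [hmul, hmul]
    exact crosses_rotate_one (finsetCongr_rotate_subset_range _ hB)
      (finsetCongr_rotate_subset_range _ hB') ih

theorem isCrossingSymmetry_rotate (a : ZMod n) : IsCrossingSymmetry n (rotate n a) := by
  refine ⟨rotate_lt_iff a, fun B B' hB hB' => ⟨fun h => ?_, crosses_rotate a hB hB'⟩⟩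
  have hinv (C : Finset ℕ) : (rotate n (-a)).finsetCongr ((rotate n a).finsetCongr C) = C := by
    rw [← Equiv.Perm.finsetCongr_mul, ← rotate_add, add_neg_cancel, rotate_zero,
      Equiv.Perm.finsetCongr_one]
  simpa only [hinv] using crosses_rotate (-a) (finsetCongr_rotate_subset_range a hB)
    (finsetCongr_rotate_subset_range a hB') h

end Rotation

theorem countA_rotation_general (n : ℕ) (S : Finset ℕ) (hS : S ⊆ Finset.range n) (t : ℤ) :
    countA n S = countA n (S.image fun x : ℕ => (((x : ℤ) + t) % (n : ℤ)).toNat) := by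
  rcases Nat.eq_zero_or_pos n with rfl | hn
  · obtain rfl : S = ∅ := by simpa using hS
    rfl
  have : NeZero n := ⟨hn.ne'⟩
  have himage : S.image (fun x : ℕ => (((x : ℤ) + t) % (n : ℤ)).toNat) =
      (rotate n t).finsetCongr S := by
    rw [Equiv.finsetCongr_apply, map_eq_image]
    refine image_congr fun x hx => ?_
    have hval := ZMod.val_intCast (n := n) ((x : ℤ) + t)
    push_cast at hval
    simp only [Equiv.coe_toEmbedding, rotate_apply_of_lt _ (mem_range.1 (hS hx))]
    omega
  rw [himage, countA_finsetCongr (isCrossingSymmetry_rotate _)]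

/-- Rotation invariance: rotating the root set `S` around the circle
`{0, ..., n-1}` does not change `A_{k+1}(S)`. -/
theorem countA_rotation (n k : ℕ) (S : Finset ℕ) (hS : S ⊆ Finset.range n)
    (hn : n = S.card + 2 * k) (t : ℤ) :
    countA n S = countA n (S.image fun x : ℕ => (((x : ℤ) + t) % (n : ℤ)).toNat) :=
  countA_rotation_general n S hS t
end

section
/- The number of acyclic orientations of a finite connected graph G with a fixed unique source v does not depend on the choice of vertex v. -/
/-!
Fix an acyclic orientation `r` of `G` whose unique source is `v`, and let `S` be the set of
vertices from which `w` is reachable. No edge enters `S` from outside, so reversing every edge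
inside `S` keeps the orientation acyclic, and afterwards `w` is the unique source. The set of
vertices from which `v` is then reachable is `S` again, so the same construction with `v` in
place of `w` undoes the reversal: it is a bijection between the two sets of orientations.
-/

namespace Relation

variable {α : Type*} {r : α → α → Prop} {S : Set α} {a b : α}

def reverseOn (r : α → α → Prop) (S : Set α) (a b : α) : Prop :=
  a ∈ S ∧ b ∈ S ∧ r b a ∨ ¬(a ∈ S ∧ b ∈ S) ∧ r a b

theorem reverseOn_reverseOn (r : α → α → Prop) (S : Set α) :
    reverseOn (reverseOn r S) S = r := by
  funext a b
  simp only [reverseOn, eq_iff_iff]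
  tauto

theorem reverseOn_iff_of_mem (ha : a ∈ S) (hb : b ∈ S) : reverseOn r S a b ↔ r b a := by
  simp [reverseOn, ha, hb]

theorem reverseOn_iff_of_notMem_left (ha : a ∉ S) : reverseOn r S a b ↔ r a b := by
  simp [reverseOn, ha]

theorem reverseOn_iff_of_notMem_right (hb : b ∉ S) : reverseOn r S a b ↔ r a b := by
  simp [reverseOn, hb]

theorem mem_of_reflTransGen (hS : ∀ ⦃a b⦄, r a b → b ∈ S → a ∈ S) (h : ReflTransGen r a b)
    (hb : b ∈ S) : a ∈ S := by
  induction h using ReflTransGen.head_induction_on with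
  | refl => exact hb
  | head hac _ ih => exact hS hac ih

theorem mem_of_reverseOn (hS : ∀ ⦃a b⦄, r a b → b ∈ S → a ∈ S) (h : reverseOn r S a b)
    (hb : b ∈ S) : a ∈ S := by
  rcases h with ⟨ha, -, -⟩ | ⟨-, hab⟩
  · exact ha
  · exact hS hab hb

theorem transGen_of_transGen_reverseOn_of_notMem (hS : ∀ ⦃a b⦄, r a b → b ∈ S → a ∈ S)
    (h : TransGen (reverseOn r S) a b) (ha : a ∉ S) : TransGen r a b := by
  induction h with
  | single hab => exact .single ((reverseOn_iff_of_notMem_left ha).1 hab)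
  | @tail c d hac hcd ih =>
    have hc : c ∉ S := fun hc =>
      ha (mem_of_reflTransGen (fun _ _ => mem_of_reverseOn hS) hac.to_reflTransGen hc)
    exact ih.tail ((reverseOn_iff_of_notMem_left hc).1 hcd)

theorem transGen_swap_of_transGen_reverseOn_of_mem (hS : ∀ ⦃a b⦄, r a b → b ∈ S → a ∈ S)
    (h : TransGen (reverseOn r S) a b) (hb : b ∈ S) : TransGen r b a := by
  induction h with
  | single hab => exact .single ((reverseOn_iff_of_mem (mem_of_reverseOn hS hab hb) hb).1 hab)
  | @tail c d _ hcd ih =>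
    have hc : c ∈ S := mem_of_reverseOn hS hcd hb
    exact (ih hc).head ((reverseOn_iff_of_mem hc hb).1 hcd)

theorem transGen_self_of_transGen_reverseOn_self (hS : ∀ ⦃a b⦄, r a b → b ∈ S → a ∈ S)
    (h : TransGen (reverseOn r S) a a) : TransGen r a a := by
  by_cases ha : a ∈ S
  · exact transGen_swap_of_transGen_reverseOn_of_mem hS h ha
  · exact transGen_of_transGen_reverseOn_of_notMem hS h ha

theorem reflTransGen_reverseOn_swap (hS : ∀ ⦃a b⦄, r a b → b ∈ S → a ∈ S)
    (h : ReflTransGen r a b) (hb : b ∈ S) : ReflTransGen (reverseOn r S) b a := by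
  induction h with
  | refl => exact .refl
  | @tail c d _ hcd ih =>
    have hc : c ∈ S := hS hcd hb
    exact (ih hc).head ((reverseOn_iff_of_mem hb hc).2 hcd)

end Relation

open Relation

namespace SimpleGraph

variable {V : Type*} {G : SimpleGraph V} {r : V → V → Prop} {v w : V}

/-- `r a b` reads "the edge `ab` of `G` is oriented from `a` to `b`". -/
structure IsAcyclicOrientationWithSource (G : SimpleGraph V) (r : V → V → Prop) (v : V) :
    Prop where
  adj : ∀ a b, r a b → G.Adj a b
  rel_iff_not_rel : ∀ a b, G.Adj a b → (r a b ↔ ¬ r b a)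
  not_transGen_self : ∀ x, ¬ TransGen r x x
  not_rel_source : ∀ x, ¬ r x v
  eq_source : ∀ u, (∀ x, ¬ r x u) → u = v

theorem isAcyclicOrientationWithSource_iff :
    G.IsAcyclicOrientationWithSource r v ↔
      (∀ a b, r a b → G.Adj a b) ∧ (∀ a b, G.Adj a b → (r a b ↔ ¬ r b a)) ∧
      (∀ x, ¬ Relation.TransGen r x x) ∧ (∀ x, ¬ r x v) ∧
      (∀ u, (∀ x, ¬ r x u) → u = v) :=
  ⟨fun ⟨h₁, h₂, h₃, h₄, h₅⟩ => ⟨h₁, h₂, h₃, h₄, h₅⟩,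
    fun ⟨h₁, h₂, h₃, h₄, h₅⟩ => ⟨h₁, h₂, h₃, h₄, h₅⟩⟩

def reroot (r : V → V → Prop) (w : V) : V → V → Prop :=
  reverseOn r {x | ReflTransGen r x w}

namespace IsAcyclicOrientationWithSource

variable [Finite V]

theorem wellFounded (h : G.IsAcyclicOrientationWithSource r v) : WellFounded r := by
  have : IsTrans V (TransGen r) := ⟨fun _ _ _ => TransGen.trans⟩
  have : Std.Irrefl (TransGen r) := ⟨h.not_transGen_self⟩
  exact Subrelation.wf TransGen.single (Finite.wellFounded_of_trans_of_irrefl (TransGen r))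

theorem reflTransGen_source (h : G.IsAcyclicOrientationWithSource r v) (x : V) :
    ReflTransGen r v x := by
  induction x using h.wellFounded.induction with
  | _ x ih =>
    by_cases hx : ∀ y, ¬ r y x
    · rw [h.eq_source x hx]
    · obtain ⟨y, hy⟩ := not_forall_not.1 hx
      exact (ih y hy).tail hy

theorem reroot (h : G.IsAcyclicOrientationWithSource r v) (w : V) :
    G.IsAcyclicOrientationWithSource (reroot r w) w := by
  set S := {x | ReflTransGen r x w}
  have hS : ∀ ⦃a b⦄, r a b → b ∈ S → a ∈ S := fun _ _ => ReflTransGen.head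
  have hw : w ∈ S := ReflTransGen.refl
  refine ⟨?_, ?_, fun x hx => h.not_transGen_self x
    (transGen_self_of_transGen_reverseOn_self hS hx), ?_, ?_⟩
  · rintro a b (⟨-, -, hba⟩ | ⟨-, hab⟩)
    · exact (h.adj b a hba).symm
    · exact h.adj a b hab
  · intro a b hab
    have := h.rel_iff_not_rel a b hab
    simp only [SimpleGraph.reroot, reverseOn]
    tauto
  · intro x hx
    have hxS : x ∈ S := mem_of_reverseOn hS hx hw
    exact h.not_transGen_self w (TransGen.head' ((reverseOn_iff_of_mem hxS hw).1 hx) hxS)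
  · intro u hu
    by_cases huS : u ∈ S
    · rcases huS.cases_head with rfl | ⟨b, hub, hbw⟩
      · rfl
      · exact absurd ((reverseOn_iff_of_mem (S := S) hbw huS).2 hub) (hu b)
    · have huv : u ≠ v := fun huv => huS (huv ▸ h.reflTransGen_source w)
      obtain ⟨x, hxu⟩ : ∃ x, r x u := by
        by_contra! hsrc
        exact huv (h.eq_source u hsrc)
      exact absurd ((reverseOn_iff_of_notMem_right huS).2 hxu) (hu x)

theorem reroot_reroot (h : G.IsAcyclicOrientationWithSource r v) (w : V) :
    SimpleGraph.reroot (SimpleGraph.reroot r w) v = r := by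
  set S := {x | ReflTransGen r x w}
  have hS : ∀ ⦃a b⦄, r a b → b ∈ S → a ∈ S := fun _ _ => ReflTransGen.head
  suffices {x | ReflTransGen (reverseOn r S) x v} = S by
    rw [SimpleGraph.reroot, SimpleGraph.reroot, this, reverseOn_reverseOn]
  ext x
  exact ⟨fun hx => mem_of_reflTransGen (fun _ _ => mem_of_reverseOn hS) hx
    (h.reflTransGen_source w), reflTransGen_reverseOn_swap hS (h.reflTransGen_source x)⟩

end IsAcyclicOrientationWithSource

def rerootEquiv [Finite V] (G : SimpleGraph V) (v w : V) :
    {r // G.IsAcyclicOrientationWithSource r v} ≃ {r // G.IsAcyclicOrientationWithSource r w} where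
  toFun r := ⟨reroot r w, r.2.reroot w⟩
  invFun r := ⟨reroot r v, r.2.reroot v⟩
  left_inv r := Subtype.ext (r.2.reroot_reroot w)
  right_inv r := Subtype.ext (r.2.reroot_reroot v)

end SimpleGraph

theorem card_acyclic_unique_source_independent_general {V : Type*} [Fintype V]
    (G : SimpleGraph V) (v w : V) :
    Nat.card {r : V → V → Prop //
      (∀ a b, r a b → G.Adj a b) ∧ (∀ a b, G.Adj a b → (r a b ↔ ¬ r b a)) ∧
      (∀ x, ¬ Relation.TransGen r x x) ∧ (∀ x, ¬ r x v) ∧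
      (∀ u, (∀ x, ¬ r x u) → u = v)} =
    Nat.card {r : V → V → Prop //
      (∀ a b, r a b → G.Adj a b) ∧ (∀ a b, G.Adj a b → (r a b ↔ ¬ r b a)) ∧
      (∀ x, ¬ Relation.TransGen r x x) ∧ (∀ x, ¬ r x w) ∧
      (∀ u, (∀ x, ¬ r x u) → u = w)} := by
  simp only [← SimpleGraph.isAcyclicOrientationWithSource_iff]
  exact Nat.card_congr (G.rerootEquiv v w)

/-- Greene–Zaslavsky: the number of acyclic orientations of a finite connected
graph `G` with a fixed unique source `v` does not depend on the choice of `v`. -/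
theorem card_acyclic_unique_source_independent {V : Type*} [Fintype V]
    (G : SimpleGraph V) (hG : G.Connected) (v w : V) :
    Nat.card {r : V → V → Prop //
      (∀ a b, r a b → G.Adj a b) ∧ (∀ a b, G.Adj a b → (r a b ↔ ¬ r b a)) ∧
      (∀ x, ¬ Relation.TransGen r x x) ∧ (∀ x, ¬ r x v) ∧
      (∀ u, (∀ x, ¬ r x u) → u = v)} =
    Nat.card {r : V → V → Prop //
      (∀ a b, r a b → G.Adj a b) ∧ (∀ a b, G.Adj a b → (r a b ↔ ¬ r b a)) ∧
      (∀ x, ¬ Relation.TransGen r x x) ∧ (∀ x, ¬ r x w) ∧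
      (∀ u, (∀ x, ¬ r x u) → u = w)} :=
  card_acyclic_unique_source_independent_general G v w
end
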